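/- If f : ℕ^k ⇀ ℕ is definable by an arithmetic formula p_f, then the minimization μf, defined by (μf)(x̄) = the least v such that f(v, x̄) = 0 and f(v', x̄) is defined and positive for all v' < v, is definable by the formula ∃v, p_f(0, v, x̄) ∧ ∀v' < v, ∃v_r > 0, p_f(v_r, v', x̄), with r = v. -/
import Mathlib


/-- First-order arithmetic terms. -/
inductive Term : ℕ → Type
  | var {k : ℕ} : Fin k → Term k
  | const {k : ℕ} : ℕ → Term k
  | succ {k : ℕ} : Term k → Term k
  | add {k : ℕ} : Term k → Term k → Term k

def Term.eval : ∀ {k : ℕ}, Term k → (Fin k → ℕ) → ℕ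
  | _, .var i, v => v i
  | _, .const n, _ => n
  | _, .succ t, v => t.eval v + 1
  | _, .add t₁ t₂, v => t₁.eval v + t₂.eval v

/-- First-order arithmetic formulas. -/
inductive Formula : ℕ → Type
  | eq {k : ℕ} : Term k → Term k → Formula k
  | lt {k : ℕ} : Term k → Term k → Formula k
  | not {k : ℕ} : Formula k → Formula k
  | and {k : ℕ} : Formula k → Formula k → Formula k
  | exN {k : ℕ} : Formula (k + 1) → Formula k

def Formula.Eval : ∀ {k : ℕ}, Formula k → (Fin k → ℕ) → Prop
  | _, .eq t₁ t₂, v => t₁.eval v = t₂.eval v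
  | _, .lt t₁ t₂, v => t₁.eval v < t₂.eval v
  | _, .not φ, v => ¬ φ.Eval v
  | _, .and φ ψ, v => φ.Eval v ∧ ψ.Eval v
  | _, .exN φ, v => ∃ a : ℕ, φ.Eval (Fin.cons a v)

/-- Definability of a partial function `f : ℕ^k ⇀ ℕ` by a formula
`p(r, x₁,…,x_k)` (variable `0` plays the role of `r`):
`f(ā) = z ↔ p(z, ā)`. -/
def DefinableP {k : ℕ} (f : (Fin k → ℕ) → Part ℕ) : Prop :=
  ∃ p : Formula (k + 1),
    ∀ (a : Fin k → ℕ) (z : ℕ), z ∈ f a ↔ p.Eval (Fin.cons z a)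


def tren {k m : ℕ} (ρ : Fin k → Fin m) : Term k → Term m
  | .var i => .var (ρ i)
  | .const n => .const n
  | .succ t => .succ (tren ρ t)
  | .add t₁ t₂ => .add (tren ρ t₁) (tren ρ t₂)

lemma tren_eval {k m : ℕ} (ρ : Fin k → Fin m) (t : Term k) (v : Fin m → ℕ) :
    (tren ρ t).eval v = t.eval (v ∘ ρ) := by
  induction t <;> simp [tren, Term.eval, *]

def fren : ∀ {k m : ℕ}, (Fin k → Fin m) → Formula k → Formula m
  | _, _, ρ, .eq t₁ t₂ => .eq (tren ρ t₁) (tren ρ t₂)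
  | _, _, ρ, .lt t₁ t₂ => .lt (tren ρ t₁) (tren ρ t₂)
  | _, _, ρ, .not φ => .not (fren ρ φ)
  | _, _, ρ, .and φ ψ => .and (fren ρ φ) (fren ρ ψ)
  | _, _, ρ, .exN φ => .exN (fren (Fin.cases 0 (Fin.succ ∘ ρ)) φ)

lemma fren_eval : ∀ {k m : ℕ} (ρ : Fin k → Fin m) (φ : Formula k) (v : Fin m → ℕ),
    (fren ρ φ).Eval v ↔ φ.Eval (v ∘ ρ)
  | _, _, ρ, .eq t₁ t₂, v => by simp [fren, Formula.Eval, tren_eval]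
  | _, _, ρ, .lt t₁ t₂, v => by simp [fren, Formula.Eval, tren_eval]
  | _, _, ρ, .not φ, v => by simp [fren, Formula.Eval, fren_eval ρ φ v]
  | _, _, ρ, .and φ ψ, v => by
      simp [fren, Formula.Eval, fren_eval ρ φ v, fren_eval ρ ψ v]
  | _, _, ρ, .exN φ, v => by
      simp only [fren, Formula.Eval]
      apply exists_congr; intro a
      rw [fren_eval]
      have : (Fin.cons a v) ∘ (Fin.cases 0 (Fin.succ ∘ ρ) : Fin _ → Fin _) =
          Fin.cons a (v ∘ ρ) := by
        funext i
        cases i using Fin.cases <;> simp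
      rw [this]

/-- If `f : ℕ^(k+1) ⇀ ℕ` is definable by an arithmetic formula `p_f`, then the
minimization `μf` — where `(μf)(x̄) = v` iff `f(v, x̄) = 0` and `f(v', x̄)` is
defined and positive for all `v' < v` — is definable by the formula
`∃v, p_f(0, v, x̄) ∧ ∀v' < v, ∃ v_r > 0, p_f(v_r, v', x̄)` with `r = v`. -/
theorem minimization_definable {k : ℕ}
    (f : (Fin (k + 1) → ℕ) → Part ℕ) (hf : DefinableP f) :
    ∃ q : Formula (k + 1),
      ∀ (x : Fin k → ℕ) (v : ℕ),
        ((0 : ℕ) ∈ f (Fin.cons v x) ∧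
          ∀ v' < v, ∃ vr : ℕ, vr ∈ f (Fin.cons v' x) ∧ 0 < vr) ↔
        q.Eval (Fin.cons v x) := by
  obtain ⟨p, hp⟩ := hf
  -- renaming Fin (k+2) → Fin (k+3) that skips position 2
  set ρ : Fin (k + 2) → Fin (k + 3) :=
    Fin.cases 0 (Fin.cases 1 (fun i : Fin k => i.succ.succ.succ)) with hρ
  refine ⟨.and (.exN (.and (.eq (.var 0) (.const 0)) p))
      (.not (.exN (.and (.lt (.var 0) (.var 1))
        (.not (.exN (.and (.lt (.const 0) (.var 0)) (fren ρ p))))))), ?_⟩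
  intro x v
  have key : ∀ (vr v' : ℕ),
      (Fin.cons vr (Fin.cons v' (Fin.cons v x)) : Fin (k+3) → ℕ) ∘ ρ =
        Fin.cons vr (Fin.cons v' x) := by
    intro vr v'
    funext i
    cases i using Fin.cases with
    | zero => rfl
    | succ j => cases j using Fin.cases with
      | zero => rfl
      | succ l => rfl
  simp only [Formula.Eval, Term.eval, Fin.cons_zero, Fin.cons_succ, fren_eval, key]
  constructor
  · rintro ⟨h0, hlt⟩
    refine ⟨⟨0, rfl, (hp _ _).1 h0⟩, ?_⟩
    rintro ⟨v', hv', hno⟩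
    obtain ⟨vr, hvr, hpos⟩ := hlt v' hv'
    exact hno ⟨vr, hpos, (hp _ _).1 hvr⟩
  · rintro ⟨⟨z, hz, hpz⟩, hno⟩
    subst hz
    refine ⟨(hp _ _).2 hpz, ?_⟩
    intro v' hv'
    by_contra hc
    push_neg at hc
    exact hno ⟨v', hv', fun ⟨vr, hpos, hpa⟩ => (hc vr ((hp _ _).2 hpa)).not_gt hpos⟩
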